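/- Let N ≥ 1 and let ψ, φ : ℝ → ℂ be such that t ↦ t^k·ψ(t) and t ↦ t^k·φ(t) are integrable for 0 ≤ k ≤ N-1, and suppose 𝓕φ(ω) = -i·sgn(ω)·𝓕ψ(ω) for every ω ∈ ℝ (i.e., φ is a Hilbert transform pair of ψ). If ∫ℝ t^k·ψ(t) dt = 0 for every k with 0 ≤ k ≤ N-1, then for either sign ε ∈ {1, -1} the Hartley-Like wavelet g(t) = (1/√2)·(ψ(t) + ε·φ(t)) has N vanishing moments: ∫ℝ t^k·g(t) dt = 0 for every k with 0 ≤ k ≤ N-1. (Proposition 6.) -/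

import Mathlib

/-!
The `k`-th moment of `f` is `(-2πi)⁻ᵏ` times the `k`-th derivative of `𝓕 f` at `0`. On `(0, ∞)`
the Hilbert pair relation reads `𝓕 φ = -i • 𝓕 ψ`, and since both transforms are `C^(N-1)`, their
derivatives at `0` are limits from the right; so the moments of `φ` vanish along with those of
`ψ`, and the Hartley-like wavelet inherits them by linearity.
-/

open MeasureTheory FourierTransform Set Complex

section Moments

variable {n : ℕ} {f : ℝ → ℂ}

lemma integrable_smul_of_integrable_moments
    (hf : ∀ k ≤ n, Integrable (fun t : ℝ => (t : ℂ) ^ k * f t)) :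
    ∀ k : ℕ, (k : ℕ∞) ≤ n → Integrable (fun t : ℝ => t ^ k • f t) := by
  intro k hk
  refine (hf k (by exact_mod_cast hk)).congr (ae_of_all _ fun t => ?_)
  simp [Complex.real_smul]

lemma contDiff_fourier_of_integrable_moments
    (hf : ∀ k ≤ n, Integrable (fun t : ℝ => (t : ℂ) ^ k * f t)) :
    ContDiff ℝ n (𝓕 f) := by
  refine Real.contDiff_fourier fun k hk => ?_
  refine (hf k (by exact_mod_cast hk)).norm.congr (ae_of_all _ fun t => ?_)
  simp

lemma iteratedDeriv_fourier_zero
    (hf : ∀ k ≤ n, Integrable (fun t : ℝ => (t : ℂ) ^ k * f t)) {k : ℕ} (hk : k ≤ n) :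
    iteratedDeriv k (𝓕 f) 0 = (-2 * Real.pi * I) ^ k * ∫ t : ℝ, (t : ℂ) ^ k * f t := by
  rw [Real.iteratedDeriv_fourier (integrable_smul_of_integrable_moments hf)
    (by exact_mod_cast hk), Real.fourier_real_eq, ← integral_const_mul]
  congr 1 with t
  simp only [mul_zero, neg_zero, AddChar.map_zero_eq_one, one_smul, smul_eq_mul, mul_pow]
  ring

end Moments

lemma iteratedDeriv_eq_of_eqOn_Ioi {F : Type*} [NormedAddCommGroup F] [NormedSpace ℝ F]
    {f g : ℝ → F} {n : ℕ} {a : ℝ} (hf : ContDiff ℝ n f) (hg : ContDiff ℝ n g)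
    (hfg : EqOn f g (Ioi a)) {k : ℕ} (hk : k ≤ n) :
    iteratedDeriv k f a = iteratedDeriv k g a := by
  have hclosure := (hfg.iteratedDeriv_of_isOpen isOpen_Ioi k).closure
    (hf.continuous_iteratedDeriv k (by exact_mod_cast hk))
    (hg.continuous_iteratedDeriv k (by exact_mod_cast hk))
  rw [closure_Ioi] at hclosure
  exact hclosure (mem_Ici.mpr le_rfl)

theorem integral_pow_mul_eq_zero_of_fourier_eqOn_Ioi {ψ φ : ℝ → ℂ} {n : ℕ} (c : ℂ)
    (hψ : ∀ k ≤ n, Integrable (fun t : ℝ => (t : ℂ) ^ k * ψ t))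
    (hφ : ∀ k ≤ n, Integrable (fun t : ℝ => (t : ℂ) ^ k * φ t))
    (h : EqOn (𝓕 φ) (fun ω => c * 𝓕 ψ ω) (Ioi 0))
    (hm : ∀ k ≤ n, ∫ t : ℝ, (t : ℂ) ^ k * ψ t = 0) :
    ∀ k ≤ n, ∫ t : ℝ, (t : ℂ) ^ k * φ t = 0 := by
  intro k hk
  have hcψ := contDiff_fourier_of_integrable_moments hψ
  have hderiv : iteratedDeriv k (𝓕 φ) 0 = 0 := by
    rw [iteratedDeriv_eq_of_eqOn_Ioi (contDiff_fourier_of_integrable_moments hφ)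
      (contDiff_const.mul hcψ) h hk, iteratedDeriv_const_mul_field,
      iteratedDeriv_fourier_zero hψ hk, hm k hk, mul_zero, mul_zero]
  have hne : (-2 * Real.pi * I) ^ k ≠ 0 :=
    pow_ne_zero _ (by simp [Real.pi_ne_zero, I_ne_zero])
  rw [iteratedDeriv_fourier_zero hφ hk] at hderiv
  exact (mul_eq_zero.mp hderiv).resolve_left hne

def IsHilbertPair (φ ψ : ℝ → ℂ) : Prop :=
  ∀ ω : ℝ, 𝓕 φ ω = -I * (Real.sign ω : ℂ) * 𝓕 ψ ω

lemma IsHilbertPair.eqOn_Ioi {φ ψ : ℝ → ℂ} (h : IsHilbertPair φ ψ) :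
    EqOn (𝓕 φ) (fun ω => -I * 𝓕 ψ ω) (Ioi 0) := by
  intro ω hω
  simp [h ω, Real.sign_of_pos (mem_Ioi.mp hω)]

theorem stmt_14_general (N : ℕ) (ψ φ : ℝ → ℂ)
    (hψ : ∀ k : ℕ, k ≤ N - 1 → Integrable (fun t : ℝ => (t : ℂ) ^ k * ψ t))
    (hφ : ∀ k : ℕ, k ≤ N - 1 → Integrable (fun t : ℝ => (t : ℂ) ^ k * φ t))
    (h : ∀ ω : ℝ, 𝓕 φ ω = -Complex.I * (Real.sign ω : ℂ) * 𝓕 ψ ω)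
    (hm : ∀ k : ℕ, k ≤ N - 1 → ∫ t : ℝ, (t : ℂ) ^ k * ψ t = 0) :
    ∀ ε : ℝ, (ε = 1 ∨ ε = -1) → ∀ k : ℕ, k ≤ N - 1 →
      ∫ t : ℝ, (t : ℂ) ^ k * ((1 / Real.sqrt 2 : ℂ) * (ψ t + (ε : ℂ) * φ t)) = 0 := by
  have hmφ := integral_pow_mul_eq_zero_of_fourier_eqOn_Ioi _ hψ hφ
    (IsHilbertPair.eqOn_Ioi h) hm
  intro ε _ k hk
  calc ∫ t : ℝ, (t : ℂ) ^ k * ((1 / Real.sqrt 2 : ℂ) * (ψ t + (ε : ℂ) * φ t))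
      = ∫ t : ℝ, (1 / Real.sqrt 2 : ℂ) * ((t : ℂ) ^ k * ψ t)
          + (1 / Real.sqrt 2 * ε : ℂ) * ((t : ℂ) ^ k * φ t) := by
        congr 1 with t; ring
    _ = (1 / Real.sqrt 2 : ℂ) * (∫ t : ℝ, (t : ℂ) ^ k * ψ t)
          + (1 / Real.sqrt 2 * ε : ℂ) * ∫ t : ℝ, (t : ℂ) ^ k * φ t := by
        rw [integral_add ((hψ k hk).const_mul _) ((hφ k hk).const_mul _), integral_const_mul,
          integral_const_mul]
    _ = 0 := by rw [hm k hk, hmφ k hk, mul_zero, mul_zero, add_zero]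

/-- Proposition 6: the Hartley-Like wavelet `(1/√2)·(ψ + ε·φ)` (with `ε = ±1`)
has the same `N` vanishing moments as its generating wavelet `ψ`. -/
theorem stmt_14 (N : ℕ) (hN : 1 ≤ N) (ψ φ : ℝ → ℂ)
    (hψ : ∀ k : ℕ, k ≤ N - 1 → Integrable (fun t : ℝ => (t : ℂ) ^ k * ψ t))
    (hφ : ∀ k : ℕ, k ≤ N - 1 → Integrable (fun t : ℝ => (t : ℂ) ^ k * φ t))
    (h : ∀ ω : ℝ, 𝓕 φ ω = -Complex.I * (Real.sign ω : ℂ) * 𝓕 ψ ω)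
    (hm : ∀ k : ℕ, k ≤ N - 1 → ∫ t : ℝ, (t : ℂ) ^ k * ψ t = 0) :
    ∀ ε : ℝ, (ε = 1 ∨ ε = -1) → ∀ k : ℕ, k ≤ N - 1 →
      ∫ t : ℝ, (t : ℂ) ^ k * ((1 / Real.sqrt 2 : ℂ) * (ψ t + (ε : ℂ) * φ t)) = 0 :=
  stmt_14_general N ψ φ hψ hφ h hm
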